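/- arXiv:2509.22428 — 2 statements merged into one kernel-verified Lean document; each statement's English description precedes it below -/
import Mathlib

section
/- Let 𝒳 be a finite alphabet with |𝒳| = N ≥ 2, let P_X be a full-support distribution on 𝒳 with p_min = min_{x∈𝒳} P_X(x), let 0 < β < 2·p_min, and let the mechanism P_{Y|X} satisfy ε-PML with respect to P_X with ε < −log(1 − p_min) (i.e., ε lies in the first privacy region). Then S_{P_X}(P_{Y|X}, B_β(P_X)) ≤ −log( 1 − (β/2)·(e^ε − 1)/p_min ), the argument of the logarithm being strictly positive under these hypotheses. -/
open Finset Real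

/-- A full-support probability distribution on a finite alphabet. -/
def FullSupport {X : Type*} [Fintype X] (p : X → ℝ) : Prop :=
  (∀ x, 0 < p x) ∧ ∑ x, p x = 1

/-- A privacy mechanism: a row-stochastic kernel. -/
def IsMech {X Y : Type*} [Fintype Y] (W : X → Y → ℝ) : Prop :=
  (∀ x y, 0 ≤ W x y) ∧ ∀ x, ∑ y, W x y = 1

/-- The output distribution `P_Y = P_{Y|X} ∘ P_X`. -/
noncomputable def outDist {X Y : Type*} [Fintype X] (W : X → Y → ℝ) (p : X → ℝ) (y : Y) : ℝ :=
  ∑ x, p x * W x y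

/-- Pointwise maximal leakage to an outcome `y`. -/
noncomputable def leak {X Y : Type*} [Fintype X] [Nonempty X] (W : X → Y → ℝ) (p : X → ℝ)
    (y : Y) : ℝ :=
  Real.log ((⨆ x, W x y) / outDist W p y)

/-- `ε_min`: the maximal leakage over outputs with positive probability. -/
noncomputable def epsMin {X Y : Type*} [Fintype X] [Nonempty X] (W : X → Y → ℝ)
    (p : X → ℝ) : ℝ :=
  sSup {r : ℝ | ∃ y, 0 < outDist W p y ∧ r = leak W p y}

section Helpers

variable {X Y : Type*} [Fintype X] [Fintype Y] [Nonempty X]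

lemma W_le_sup (W : X → Y → ℝ) (y : Y) (x : X) : W x y ≤ ⨆ x, W x y :=
  le_ciSup (f := fun x => W x y) ((Set.finite_range _).bddAbove) x

lemma outDist_le_sup (W : X → Y → ℝ) (hW0 : ∀ x y, 0 ≤ W x y) (p : X → ℝ)
    (hp : ∀ x, 0 < p x) (hp1 : ∑ x, p x = 1) (y : Y) : outDist W p y ≤ ⨆ x, W x y := by
  calc outDist W p y = ∑ x, p x * W x y := rfl
    _ ≤ ∑ x, p x * (⨆ x, W x y) :=
        Finset.sum_le_sum fun x _ => mul_le_mul_of_nonneg_left (W_le_sup W y x) (hp x).le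
    _ = ⨆ x, W x y := by rw [← Finset.sum_mul, hp1, one_mul]

lemma sum_outDist (W : X → Y → ℝ) (hW : IsMech W) (p : X → ℝ) (hp1 : ∑ x, p x = 1) :
    ∑ y, outDist W p y = 1 := by
  unfold outDist
  rw [Finset.sum_comm]
  simp_rw [← Finset.mul_sum]
  simp only [hW.2, mul_one]
  exact hp1

lemma exists_out_pos (W : X → Y → ℝ) (hW : IsMech W) (p : X → ℝ) (hp : FullSupport p) :
    ∃ y, 0 < outDist W p y := by
  by_contra h
  push_neg at h
  have h1 := sum_outDist W hW p hp.2
  have h2 : ∑ y, outDist W p y ≤ 0 := Finset.sum_nonpos fun y _ => h y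
  linarith

lemma epsSet_bdd (W : X → Y → ℝ) (p : X → ℝ) :
    BddAbove {r : ℝ | ∃ y, 0 < outDist W p y ∧ r = leak W p y} := by
  apply Set.Finite.bddAbove
  apply (Set.finite_range (leak W p)).subset
  rintro r ⟨y, _, rfl⟩
  exact ⟨y, rfl⟩

lemma leak_le_epsMin (W : X → Y → ℝ) (p : X → ℝ) {y : Y} (hy : 0 < outDist W p y) :
    leak W p y ≤ epsMin W p :=
  le_csSup (epsSet_bdd W p) ⟨y, hy, rfl⟩

end Helpers

/-- First-privacy-region bound on the local leakage sensitivity: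
`S_{P_X}(P_{Y|X}, B_β(P_X)) ≤ -log(1 - (β/2)·(e^ε - 1)/p_min)`, and the argument of the
logarithm is strictly positive under the hypotheses. -/
theorem stmt7 {X Y : Type*} [Fintype X] [Fintype Y] [Nonempty X]
    (hN : 2 ≤ Fintype.card X)
    (P : X → ℝ) (hP : FullSupport P)
    (pmin : ℝ) (hpmin : pmin = ⨅ x, P x)
    (β : ℝ) (hβ0 : 0 < β) (hβ : β < 2 * pmin)
    (W : X → Y → ℝ) (hW : IsMech W)
    (ε : ℝ) (hPML : epsMin W P ≤ ε) (hε : ε < -Real.log (1 - pmin)) :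
    0 < 1 - β / 2 * (Real.exp ε - 1) / pmin ∧
      ∀ Q : X → ℝ, FullSupport Q → (∑ x, |P x - Q x|) ≤ β →
        epsMin W Q - epsMin W P ≤ -Real.log (1 - β / 2 * (Real.exp ε - 1) / pmin) := by
  classical
  obtain ⟨hPpos, hPsum⟩ := hP
  obtain ⟨hW0, hW1⟩ := hW
  -- basic facts about pmin
  obtain ⟨x₀, hx₀⟩ := Finite.exists_min P
  have hpmin_eq : pmin = P x₀ := by
    rw [hpmin]
    exact le_antisymm (ciInf_le ((Set.finite_range _).bddBelow) x₀) (le_ciInf hx₀)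
  have hpmin0 : 0 < pmin := hpmin_eq ▸ hPpos x₀
  have hpmin_le : ∀ x, pmin ≤ P x := fun x => hpmin_eq ▸ hx₀ x
  -- pmin ≤ 1/2
  have h2p : 2 * pmin ≤ 1 := by
    obtain ⟨x₁, x₂, hne⟩ := Fintype.exists_pair_of_one_lt_card (α := X) (by omega)
    have hsub : ({x₁, x₂} : Finset X) ⊆ Finset.univ := Finset.subset_univ _
    have hle : P x₁ + P x₂ ≤ ∑ x, P x := by
      rw [← Finset.sum_pair hne]
      exact Finset.sum_le_sum_of_subset_of_nonneg hsub fun x _ _ => (hPpos x).le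
    have h1 := hpmin_le x₁; have h2 := hpmin_le x₂
    linarith
  set E := Real.exp ε with hE
  have hE0 : 0 < E := Real.exp_pos ε
  have h1p : 0 < 1 - pmin := by linarith
  have hEub : E * (1 - pmin) < 1 := by
    have : E < Real.exp (-Real.log (1 - pmin)) := Real.exp_lt_exp.mpr hε
    rw [Real.exp_neg, Real.exp_log h1p] at this
    calc E * (1 - pmin) < (1 - pmin)⁻¹ * (1 - pmin) := by
          exact mul_lt_mul_of_pos_right this h1p
      _ = 1 := inv_mul_cancel₀ h1p.ne'
  -- Part 1: positivity of K
  have hKpos : 0 < 1 - β / 2 * (E - 1) / pmin := by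
    rw [sub_pos, div_lt_one hpmin0]
    rcases le_or_gt E 1 with hE1 | hE1
    · nlinarith
    · nlinarith [mul_pos hβ0 hE0, mul_pos hpmin0 hE0]
  refine ⟨hKpos, ?_⟩
  set K := 1 - β / 2 * (E - 1) / pmin with hK
  clear_value K
  clear_value E
  intro Q hQ hQβ
  obtain ⟨hQpos, hQsum⟩ := hQ
  -- nonemptiness of the leak sets
  obtain ⟨yQ, hyQ⟩ := exists_out_pos W ⟨hW0, hW1⟩ Q ⟨hQpos, hQsum⟩
  -- main claim: each leak under Q is bounded
  have key : ∀ y, 0 < outDist W Q y → leak W Q y ≤ epsMin W P + (-Real.log K) := by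
    intro y hQy
    set M := ⨆ x, W x y with hM
    -- P_Y(y) > 0
    have hPy : 0 < outDist W P y := by
      by_contra hcon
      push_neg at hcon
      have hz : outDist W P y = 0 :=
        le_antisymm hcon (Finset.sum_nonneg fun x _ => mul_nonneg (hPpos x).le (hW0 x y))
      unfold outDist at hz
      have hall : ∀ x ∈ Finset.univ, P x * W x y = 0 :=
        (Finset.sum_eq_zero_iff_of_nonneg
          (fun x _ => mul_nonneg (hPpos x).le (hW0 x y))).mp hz
      have hWz : ∀ x, W x y = 0 := fun x =>
        (mul_eq_zero.mp (hall x (Finset.mem_univ x))).resolve_left (hPpos x).ne'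
      have : outDist W Q y = 0 := by
        unfold outDist; simp [hWz]
      linarith
    have hPyM : outDist W P y ≤ M := outDist_le_sup W hW0 P hPpos hPsum y
    have hM0 : 0 < M := lt_of_lt_of_le hPy hPyM
    -- PML bound: M ≤ E * P_Y(y)
    have hMle : M ≤ E * outDist W P y := by
      have hl : leak W P y ≤ ε := le_trans (leak_le_epsMin W P hPy) hPML
      have : M / outDist W P y ≤ E := by
        rw [← Real.exp_log (div_pos hM0 hPy), hE]
        exact Real.exp_le_exp.mpr hl
      calc M = M / outDist W P y * outDist W P y := by field_simp
        _ ≤ E * outDist W P y := mul_le_mul_of_nonneg_right this hPy.le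
    -- the minimum of W · y
    obtain ⟨xm, hxm⟩ := Finite.exists_min (fun x => W x y)
    set m := W xm y with hm
    have hmM : m ≤ M := W_le_sup W y xm
    have hm0 : 0 ≤ m := hW0 xm y
    -- P_Y ≤ pmin * m + (1 - pmin) * M
    have hPy_ub : outDist W P y ≤ pmin * m + (1 - pmin) * M := by
      have hsplit : outDist W P y ≤ P xm * m + (1 - P xm) * M := by
        have : outDist W P y = P xm * m + ∑ x ∈ Finset.univ.erase xm, P x * W x y := by
          rw [outDist, ← Finset.add_sum_erase _ _ (Finset.mem_univ xm)]
        rw [this]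
        have h1 : ∑ x ∈ Finset.univ.erase xm, P x * W x y
            ≤ ∑ x ∈ Finset.univ.erase xm, P x * M :=
          Finset.sum_le_sum fun x _ =>
            mul_le_mul_of_nonneg_left (W_le_sup W y x) (hPpos x).le
        have h2 : ∑ x ∈ Finset.univ.erase xm, P x * M = (1 - P xm) * M := by
          rw [← Finset.sum_mul]
          congr 1
          have h3 := Finset.add_sum_erase Finset.univ P (Finset.mem_univ xm)
          linarith
        linarith
      have hPxm : pmin ≤ P xm := hpmin_le xm
      nlinarith [hPpos xm]
    -- M - m ≤ P_Y * (E - 1) / pmin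
    have hMm : M - m ≤ outDist W P y * (E - 1) / pmin := by
      rw [le_div_iff₀ hpmin0]
      nlinarith
    -- Q_Y ≥ P_Y * K
    have hQy_lb : outDist W P y * K ≤ outDist W Q y := by
      have hdiff : outDist W Q y - outDist W P y = ∑ x, (Q x - P x) * (W x y - m) := by
        have h1 : ∑ x, (Q x - P x) * (W x y - m)
            = ∑ x, (Q x - P x) * W x y - (∑ x, (Q x - P x)) * m := by
          rw [Finset.sum_mul, ← Finset.sum_sub_distrib]
          congr 1; ext x; ring
        have h2 : ∑ x, (Q x - P x) = 0 := by
          rw [Finset.sum_sub_distrib, hQsum, hPsum]; ring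
        rw [h1, h2, zero_mul, sub_zero, outDist, outDist, ← Finset.sum_sub_distrib]
        congr 1; ext x; ring
      have hterm : ∀ x ∈ Finset.univ,
          ((Q x - P x) - |Q x - P x|) / 2 * (M - m) ≤ (Q x - P x) * (W x y - m) := by
        intro x _
        have hw1 : m ≤ W x y := hxm x
        have hw2 : W x y ≤ M := W_le_sup W y x
        rcases le_or_gt 0 (Q x - P x) with ha | ha
        · rw [abs_of_nonneg ha]
          simp only [sub_self, zero_div, zero_mul]
          exact mul_nonneg ha (by linarith)
        · rw [abs_of_neg ha]
          nlinarith
      have hsum' : ∑ x, ((Q x - P x) - |Q x - P x|) / 2 * (M - m)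
          ≤ ∑ x, (Q x - P x) * (W x y - m) := Finset.sum_le_sum hterm
      have habs : ∑ x, |Q x - P x| ≤ β := by
        have : ∀ x, |Q x - P x| = |P x - Q x| := fun x => abs_sub_comm _ _
        simp_rw [this]; exact hQβ
      have hlhs : -(β / 2) * (M - m) ≤ ∑ x, ((Q x - P x) - |Q x - P x|) / 2 * (M - m) := by
        have : ∑ x, ((Q x - P x) - |Q x - P x|) / 2 * (M - m)
            = ((∑ x, (Q x - P x)) - ∑ x, |Q x - P x|) / 2 * (M - m) := by
          rw [← Finset.sum_mul, ← Finset.sum_div, Finset.sum_sub_distrib]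
        rw [this]
        have h2 : ∑ x, (Q x - P x) = 0 := by
          rw [Finset.sum_sub_distrib, hQsum, hPsum]; ring
        rw [h2, zero_sub]
        have : 0 ≤ M - m := by linarith
        apply mul_le_mul_of_nonneg_right _ this
        linarith
      have hchain : outDist W P y - β / 2 * (M - m) ≤ outDist W Q y := by
        have := hdiff ▸ (le_trans hlhs hsum')
        linarith
      have hfin : β / 2 * (M - m) ≤ outDist W P y * (β / 2 * (E - 1) / pmin) := by
        have hb2 : 0 ≤ β / 2 := by linarith
        calc β / 2 * (M - m) ≤ β / 2 * (outDist W P y * (E - 1) / pmin) :=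
              mul_le_mul_of_nonneg_left hMm hb2
          _ = outDist W P y * (β / 2 * (E - 1) / pmin) := by ring
      have : outDist W P y * K = outDist W P y - outDist W P y * (β / 2 * (E - 1) / pmin) := by
        rw [hK]; ring
      linarith
    have hQyM : outDist W Q y ≤ M := outDist_le_sup W hW0 Q hQpos hQsum y
    -- compare leaks
    have hleakP : leak W P y ≤ epsMin W P := leak_le_epsMin W P hPy
    have hlog : Real.log (outDist W P y) + Real.log K ≤ Real.log (outDist W Q y) := by
      rw [← Real.log_mul hPy.ne' hKpos.ne']
      exact Real.log_le_log (mul_pos hPy hKpos) hQy_lb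
    have hleakQ : leak W Q y = Real.log M - Real.log (outDist W Q y) := by
      rw [leak, Real.log_div hM0.ne' hQy.ne']
    have hleakP' : leak W P y = Real.log M - Real.log (outDist W P y) := by
      rw [leak, Real.log_div hM0.ne' hPy.ne']
    rw [hleakQ]
    have : Real.log M - Real.log (outDist W Q y)
        ≤ Real.log M - Real.log (outDist W P y) - Real.log K := by linarith
    linarith [hleakP' ▸ hleakP]
  -- conclude via csSup
  have hsup : epsMin W Q ≤ epsMin W P + (-Real.log K) := by
    unfold epsMin
    refine csSup_le ⟨leak W Q yQ, ⟨yQ, hyQ, rfl⟩⟩ ?_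
    rintro r ⟨y, hy, rfl⟩
    exact key y hy
  linarith
end

section
/- Worst-case leakage of the binary Laplace mechanism over an ℓ1-uncertainty set: let b > 0, let f_L(t) = (1/(2b))·exp(−|t|/b), let P̂ be a full-support distribution on {−1, 1} with p̂_min = min(P̂(−1), P̂(1)), and let 0 < β < 2·p̂_min. Then the supremum, over all full-support distributions Q on {−1,1} with ||P̂ − Q||₁ ≤ β, of sup_{y∈ℝ} log( max_{x∈{−1,1}} f_L(y−x) / ( Q(−1)·f_L(y+1) + Q(1)·f_L(y−1) ) ) equals 2/b − log( (p̂_min − β/2)·(e^{2/b} − 1) + 1 ). -/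
open Real

/-- Density of the zero-mean Laplace distribution with scale `b`. -/
noncomputable def lapDens (b t : ℝ) : ℝ := (1 / (2 * b)) * Real.exp (-|t| / b)

lemma lap_pos {b : ℝ} (hb : 0 < b) (t : ℝ) : 0 < lapDens b t := by
  unfold lapDens; positivity

lemma lap_ge {b : ℝ} (hb : 0 < b) {s t : ℝ} (h : |s| ≤ |t| + 2) :
    Real.exp (-(2/b)) * lapDens b t ≤ lapDens b s := by
  unfold lapDens
  rw [mul_comm (Real.exp (-(2/b))), mul_assoc, ← Real.exp_add]
  apply mul_le_mul_of_nonneg_left _ (by positivity)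
  apply Real.exp_le_exp.2
  have : -|t| / b + -(2 / b) = -(|t| + 2) / b := by field_simp; ring
  rw [this, neg_div, neg_div]
  exact neg_le_neg (by gcongr)

lemma inner_sup {b : ℝ} (hb : 0 < b) {q : ℝ} (hq0 : 0 < q) (hq1 : q < 1) :
    (⨆ y : ℝ, Real.log (max (lapDens b (y + 1)) (lapDens b (y - 1)) /
      (q * lapDens b (y + 1) + (1 - q) * lapDens b (y - 1)))) =
    -Real.log (min q (1 - q) + (1 - min q (1 - q)) * Real.exp (-(2/b))) := by
  set ρ := Real.exp (-(2/b)) with hρdef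
  set m := min q (1 - q) with hmdef
  have hρ0 : 0 < ρ := Real.exp_pos _
  have hρ1 : ρ ≤ 1 := Real.exp_le_one_iff.2 (neg_nonpos.2 (by positivity))
  have hm0 : 0 < m := lt_min hq0 (by linarith)
  have hm1 : m ≤ 1 := le_trans (min_le_left _ _) hq1.le
  have hmq : m ≤ q := min_le_left _ _
  have hmq' : m ≤ 1 - q := min_le_right _ _
  set z := m + (1 - m) * ρ with hzdef
  have hz0 : 0 < z := by nlinarith
  have hub : ∀ y : ℝ, Real.log (max (lapDens b (y + 1)) (lapDens b (y - 1)) /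
      (q * lapDens b (y + 1) + (1 - q) * lapDens b (y - 1))) ≤ -Real.log z := by
    intro y
    have ha : 0 < lapDens b (y + 1) := lap_pos hb _
    have hc : 0 < lapDens b (y - 1) := lap_pos hb _
    set a := lapDens b (y + 1)
    set c := lapDens b (y - 1)
    have hD : 0 < q * a + (1 - q) * c := by nlinarith
    have hkey : z * max a c ≤ q * a + (1 - q) * c := by
      rcases le_total c a with h | h
      · rw [max_eq_left h]
        have habs : |y - 1| ≤ |y + 1| + 2 := by
          have h2 := abs_add_le (y + 1) (-2)
          have h3 : y + 1 + (-2) = y - 1 := by ring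
          rw [h3] at h2
          simpa using h2
        have hca : ρ * a ≤ c := lap_ge hb habs
        nlinarith
      · rw [max_eq_right h]
        have habs : |y + 1| ≤ |y - 1| + 2 := by
          have h2 := abs_add_le (y - 1) 2
          have h3 : y - 1 + 2 = y + 1 := by ring
          rw [h3] at h2
          simpa using h2
        have hca : ρ * c ≤ a := lap_ge hb habs
        nlinarith
    have hdiv : max a c / (q * a + (1 - q) * c) ≤ 1 / z := by
      rw [div_le_div_iff₀ hD hz0]
      nlinarith
    calc Real.log (max a c / (q * a + (1 - q) * c)) ≤ Real.log (1 / z) := by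
          apply Real.log_le_log (by positivity) hdiv
      _ = -Real.log z := by rw [one_div, Real.log_inv]
  have h2b : (0:ℝ) < 2 * b := by linarith
  have hl0 : lapDens b 0 = 1 / (2 * b) := by unfold lapDens; simp
  have hl2 : lapDens b (-2) = 1 / (2 * b) * ρ := by
    unfold lapDens; rw [hρdef]; norm_num [neg_div]
  have hl2' : lapDens b 2 = 1 / (2 * b) * ρ := by
    unfold lapDens; rw [hρdef]; norm_num [neg_div]
  have hbdd : BddAbove (Set.range fun y : ℝ => Real.log (max (lapDens b (y + 1)) (lapDens b (y - 1)) /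
      (q * lapDens b (y + 1) + (1 - q) * lapDens b (y - 1)))) := by
    refine ⟨-Real.log z, ?_⟩
    rintro r ⟨y, rfl⟩
    exact hub y
  apply le_antisymm (ciSup_le hub)
  rcases le_total q (1 - q) with hq | hq
  · have hmq2 : m = q := min_eq_left hq
    have e1 : (-1:ℝ) + 1 = 0 := by norm_num
    have e2 : (-1:ℝ) - 1 = -2 := by norm_num
    have hval : Real.log (max (lapDens b ((-1:ℝ) + 1)) (lapDens b ((-1:ℝ) - 1)) /
        (q * lapDens b ((-1:ℝ) + 1) + (1 - q) * lapDens b ((-1:ℝ) - 1))) = -Real.log z := by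
      rw [e1, e2, hl0, hl2]
      have hz' : (0:ℝ) < q + (1 - q) * ρ := by nlinarith
      have hmax : max (1 / (2 * b)) (1 / (2 * b) * ρ) = 1 / (2 * b) := by
        apply max_eq_left; nlinarith [one_div_pos.2 h2b]
      rw [hmax]
      have hh : 1 / (2 * b) / (q * (1 / (2 * b)) + (1 - q) * (1 / (2 * b) * ρ)) =
          1 / (q + (1 - q) * ρ) := by
        field_simp
      have hz2 : z = q + (1 - q) * ρ := by rw [hzdef, hmq2]
      rw [hh, one_div, Real.log_inv, hz2]
    have := le_ciSup hbdd (-1 : ℝ)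
    rw [hval] at this
    exact this
  · have hmq2 : m = 1 - q := min_eq_right hq
    have e1 : (1:ℝ) + 1 = 2 := by norm_num
    have e2 : (1:ℝ) - 1 = 0 := by norm_num
    have hval : Real.log (max (lapDens b ((1:ℝ) + 1)) (lapDens b ((1:ℝ) - 1)) /
        (q * lapDens b ((1:ℝ) + 1) + (1 - q) * lapDens b ((1:ℝ) - 1))) = -Real.log z := by
      rw [e1, e2, hl0, hl2']
      have hz' : (0:ℝ) < (1 - q) + q * ρ := by nlinarith
      have hmax : max (1 / (2 * b) * ρ) (1 / (2 * b)) = 1 / (2 * b) := by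
        apply max_eq_right; nlinarith [one_div_pos.2 h2b]
      rw [hmax]
      have hh : q * (1 / (2 * b) * ρ) + (1 - q) * (1 / (2 * b)) =
          (1 / (2 * b)) * (1 - q + q * ρ) := by ring
      have hz2 : z = 1 - q + q * ρ := by rw [hzdef, hmq2]; ring
      rw [hh, div_mul_cancel_left₀ (by positivity : (1:ℝ)/(2*b) ≠ 0), Real.log_inv, hz2]
    have := le_ciSup hbdd (1 : ℝ)
    rw [hval] at this
    exact this

lemma log_form {b : ℝ} (hb : 0 < b) {m : ℝ} (hm0 : 0 < m) (hm1 : m ≤ 1) :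
    -Real.log (m + (1 - m) * Real.exp (-(2/b))) =
    2 / b - Real.log (m * (Real.exp (2/b) - 1) + 1) := by
  have hE1 : 1 < Real.exp (2/b) := by
    rw [show (1:ℝ) = Real.exp 0 by simp]
    exact Real.exp_lt_exp.2 (by positivity)
  have hE : Real.exp (2/b) * Real.exp (-(2/b)) = 1 := by
    rw [← Real.exp_add]; norm_num
  have hpos : 0 < m * (Real.exp (2/b) - 1) + 1 := by nlinarith
  have hid : m + (1 - m) * Real.exp (-(2/b)) =
      (m * (Real.exp (2/b) - 1) + 1) * Real.exp (-(2/b)) := by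
    linear_combination -m * hE
  rw [hid, Real.log_mul hpos.ne' (Real.exp_ne_zero _), Real.log_exp]
  ring


/-- Worst-case leakage of the binary Laplace mechanism over an ℓ1-uncertainty ball:
the supremum over full-support distributions `Q` on `{−1, 1}` with `‖P̂ − Q‖₁ ≤ β` of the
worst-case pointwise maximal leakage equals
`2/b − log((p̂_min − β/2)(e^{2/b} − 1) + 1)`.  Here a distribution on `{−1, 1}` is
parametrized by its probability `q` of the symbol `−1`. -/
theorem stmt17 (b : ℝ) (hb : 0 < b)
    (phat : ℝ) (hphat0 : 0 < phat) (hphat1 : phat < 1)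
    (β : ℝ) (hβ0 : 0 < β) (hβ : β < 2 * min phat (1 - phat)) :
    sSup {r : ℝ | ∃ q : ℝ, 0 < q ∧ q < 1 ∧
        |phat - q| + |(1 - phat) - (1 - q)| ≤ β ∧
        r = ⨆ y : ℝ, Real.log (max (lapDens b (y + 1)) (lapDens b (y - 1)) /
          (q * lapDens b (y + 1) + (1 - q) * lapDens b (y - 1)))} =
      2 / b - Real.log ((min phat (1 - phat) - β / 2) * (Real.exp (2 / b) - 1) + 1) := by
  set S := {r : ℝ | ∃ q : ℝ, 0 < q ∧ q < 1 ∧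
        |phat - q| + |(1 - phat) - (1 - q)| ≤ β ∧
        r = ⨆ y : ℝ, Real.log (max (lapDens b (y + 1)) (lapDens b (y - 1)) /
          (q * lapDens b (y + 1) + (1 - q) * lapDens b (y - 1)))} with hSdef
  have hE1 : 1 < Real.exp (2/b) := by
    rw [show (1:ℝ) = Real.exp 0 by simp]
    exact Real.exp_lt_exp.2 (by positivity)
  have hβ2 : β / 2 < min phat (1 - phat) := by linarith
  have hmin1 : min phat (1 - phat) ≤ phat := min_le_left _ _
  have hmin2 : min phat (1 - phat) ≤ 1 - phat := min_le_right _ _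
  have hm00 : 0 < min phat (1 - phat) - β / 2 := by linarith
  have hm01 : min phat (1 - phat) - β / 2 ≤ 1 := by
    have : min phat (1 - phat) ≤ 1 := by linarith
    linarith
  -- the value of an element for given q
  have hvalq : ∀ q : ℝ, 0 < q → q < 1 →
      (⨆ y : ℝ, Real.log (max (lapDens b (y + 1)) (lapDens b (y - 1)) /
        (q * lapDens b (y + 1) + (1 - q) * lapDens b (y - 1)))) =
      2 / b - Real.log (min q (1 - q) * (Real.exp (2/b) - 1) + 1) := by
    intro q hq0 hq1
    have hm0' : 0 < min q (1 - q) := lt_min hq0 (by linarith)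
    have hm1' : min q (1 - q) ≤ 1 := le_trans (min_le_left _ _) hq1.le
    rw [inner_sup hb hq0 hq1, log_form hb hm0' hm1']
  -- upper bound for every element
  have hub : ∀ r ∈ S, r ≤ 2 / b - Real.log ((min phat (1 - phat) - β / 2) *
      (Real.exp (2 / b) - 1) + 1) := by
    rintro r ⟨q, hq0, hq1, hcon, rfl⟩
    rw [hvalq q hq0 hq1]
    have hqc : |phat - q| ≤ β / 2 := by
      have : (1 - phat) - (1 - q) = -(phat - q) := by ring
      rw [this, abs_neg] at hcon
      linarith
    rw [abs_le] at hqc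
    have hminq : min phat (1 - phat) - β / 2 ≤ min q (1 - q) := by
      apply le_min <;> [skip; skip] <;> cases' hqc with h1 h2 <;> linarith
    have harg : 0 < (min phat (1 - phat) - β / 2) * (Real.exp (2 / b) - 1) + 1 := by
      nlinarith
    have hlog : Real.log ((min phat (1 - phat) - β / 2) * (Real.exp (2 / b) - 1) + 1) ≤
        Real.log (min q (1 - q) * (Real.exp (2 / b) - 1) + 1) := by
      apply Real.log_le_log harg
      nlinarith
    linarith
  have hne : S.Nonempty := by
    refine ⟨_, phat, hphat0, hphat1, ?_, rfl⟩
    simp only [sub_self, abs_zero]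
    norm_num
    linarith [abs_nonneg ((1 - phat) - (1 - phat))]
  apply le_antisymm (csSup_le hne hub)
  apply le_csSup ⟨_, hub⟩
  -- exhibit the maximizer
  rcases le_total phat (1 - phat) with hp | hp
  · have hminp : min phat (1 - phat) = phat := min_eq_left hp
    refine ⟨phat - β / 2, by linarith [hβ2, hminp ▸ hβ2], by linarith, ?_, ?_⟩
    · have h1 : |phat - (phat - β / 2)| = β / 2 := by
        rw [show phat - (phat - β / 2) = β / 2 by ring, abs_of_pos (by linarith)]
      have h2 : |(1 - phat) - (1 - (phat - β / 2))| = β / 2 := by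
        rw [show (1 - phat) - (1 - (phat - β / 2)) = -(β / 2) by ring, abs_neg,
          abs_of_pos (by linarith)]
      rw [h1, h2]; linarith
    · have hq0 : 0 < phat - β / 2 := by rw [hminp] at hβ2; linarith
      have hq1 : phat - β / 2 < 1 := by linarith
      rw [hvalq _ hq0 hq1]
      have : min (phat - β / 2) (1 - (phat - β / 2)) = min phat (1 - phat) - β / 2 := by
        rw [hminp, min_eq_left (by linarith)]
      rw [this]
  · have hminp : min phat (1 - phat) = 1 - phat := min_eq_right hp
    refine ⟨phat + β / 2, by linarith, ?_, ?_, ?_⟩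
    · rw [hminp] at hβ2; linarith
    · have h1 : |phat - (phat + β / 2)| = β / 2 := by
        rw [show phat - (phat + β / 2) = -(β / 2) by ring, abs_neg,
          abs_of_pos (by linarith)]
      have h2 : |(1 - phat) - (1 - (phat + β / 2))| = β / 2 := by
        rw [show (1 - phat) - (1 - (phat + β / 2)) = β / 2 by ring, abs_of_pos (by linarith)]
      rw [h1, h2]; linarith
    · have hq1 : phat + β / 2 < 1 := by rw [hminp] at hβ2; linarith
      have hq0 : 0 < phat + β / 2 := by linarith
      rw [hvalq _ hq0 hq1]
      have : min (phat + β / 2) (1 - (phat + β / 2)) = min phat (1 - phat) - β / 2 := by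
        rw [hminp, min_eq_right (by linarith)]
        ring
      rw [this]
end
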